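/- With the notation of the previous context (duality functors D, D' with D' ∘ D ≅ id and D ∘ D' ≅ id, and the glued category Hol of triples (E, F, ε)), the assignment (E, F, ε) ↦ (D'(F), D(E), ε') — where ε' : D(D'(F)) ≅ F ≅ D(E) is the composite of the counit with ε⁻¹ — extends to a functor 𝔻 : Hol → Hol, and 𝔻 ∘ 𝔻 is naturally isomorphic to the identity of Hol. -/
import Mathlib


open CategoryTheory

variable {C C' : Type*} [Category C] [Category C']

/-- Objects of the glued category `Hol`: triples `(E, F, ε : D(E) ≅ F)`. -/
structure HolObj (D : C ⥤ C') where
  E : C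
  F : C'
  ε : D.obj E ≅ F

/-- Morphisms of triples, compatible with the structural isomorphisms. -/
@[ext]
structure HolHom {D : C ⥤ C'} (A B : HolObj D) where
  f : A.E ⟶ B.E
  g : A.F ⟶ B.F
  w : D.map f ≫ B.ε.hom = A.ε.hom ≫ g := by aesop_cat

instance (D : C ⥤ C') : Category (HolObj D) where
  Hom A B := HolHom A B
  id A := { f := 𝟙 A.E, g := 𝟙 A.F, w := by simp }
  comp {A B Z} u v :=
    { f := u.f ≫ v.f
      g := u.g ≫ v.g
      w := by
        rw [Functor.map_comp, Category.assoc, v.w, ← Category.assoc, u.w,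
          Category.assoc] }
  id_comp u := by apply HolHom.ext <;> simp
  comp_id u := by apply HolHom.ext <;> simp
  assoc u v w := by apply HolHom.ext <;> simp


section Aux

@[simp] lemma HolHom.comp_f {D : C ⥤ C'} {A B Z : HolObj D} (u : A ⟶ B) (v : B ⟶ Z) :
    (u ≫ v).f = u.f ≫ v.f := rfl

@[simp] lemma HolHom.comp_g {D : C ⥤ C'} {A B Z : HolObj D} (u : A ⟶ B) (v : B ⟶ Z) :
    (u ≫ v).g = u.g ≫ v.g := rfl

@[simp] lemma HolHom.id_f {D : C ⥤ C'} (A : HolObj D) : (𝟙 A : A ⟶ A).f = 𝟙 A.E := rfl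

@[simp] lemma HolHom.id_g {D : C ⥤ C'} (A : HolObj D) : (𝟙 A : A ⟶ A).g = 𝟙 A.F := rfl

lemma HolHom.g_eq {D : C ⥤ C'} {A B : HolObj D} (u : A ⟶ B) :
    u.g = A.ε.inv ≫ D.map u.f ≫ B.ε.hom := by
  rw [Iso.eq_inv_comp]
  exact u.w.symm

lemma HolHom.ext_f {D : C ⥤ C'} {A B : HolObj D} {u v : A ⟶ B} (h : u.f = v.f) : u = v := by
  apply HolHom.ext h
  rw [HolHom.g_eq u, HolHom.g_eq v, h]

/-- An isomorphism in `Hol` built from an isomorphism of the first components. -/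
def holIsoOfIso {D : C ⥤ C'} {X Y : HolObj D} (e : X.E ≅ Y.E) : X ≅ Y where
  hom := { f := e.hom, g := X.ε.inv ≫ D.map e.hom ≫ Y.ε.hom, w := by simp }
  inv := { f := e.inv, g := Y.ε.inv ≫ D.map e.inv ≫ X.ε.hom, w := by simp }
  hom_inv_id := HolHom.ext_f (by simp)
  inv_hom_id := HolHom.ext_f (by simp)

/-- The duality functor on `Hol`. -/
def dualHol (D : C ⥤ C') (D' : C' ⥤ C) (θ : D' ⋙ D ≅ 𝟭 C') :
    HolObj D ⥤ HolObj D where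
  obj A := ⟨D'.obj A.F, D.obj A.E, (θ.app A.F).trans A.ε.symm⟩
  map {A B} u :=
    { f := D'.map u.g
      g := D.map u.f
      w := by
        have h := θ.hom.naturality u.g
        simp only [Functor.comp_obj, Functor.comp_map, Functor.id_obj, Functor.id_map] at h
        have h2 : u.g ≫ B.ε.inv = A.ε.inv ≫ D.map u.f := by
          rw [Iso.eq_inv_comp, ← Category.assoc, ← u.w, Category.assoc, Iso.hom_inv_id,
            Category.comp_id]
        simp only [Iso.trans_hom, Iso.symm_hom, Iso.app_hom, ← Category.assoc, h]
        simp only [Category.assoc, h2] }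
  map_id A := HolHom.ext_f (by simp)
  map_comp u v := HolHom.ext_f (by simp)

end Aux

/-- given duality functors `D`, `D'` with `η : D' ∘ D ≅ 𝟭 C` and
`θ : D ∘ D' ≅ 𝟭 C'`, the assignment `(E, F, ε) ↦ (D'(F), D(E), ε')`, where
`ε' : D(D'(F)) ≅ F ≅ D(E)` is the composite of the counit `θ` with `ε⁻¹`,
extends to a functor `𝔻 : Hol ⥤ Hol` with `𝔻 ∘ 𝔻` naturally isomorphic to the
identity of `Hol`. -/
theorem dual_functor_on_Hol (D : C ⥤ C') (D' : C' ⥤ C)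
    (η : D ⋙ D' ≅ 𝟭 C) (θ : D' ⋙ D ≅ 𝟭 C') :
    ∃ 𝔻 : HolObj D ⥤ HolObj D,
      (∀ A : HolObj D,
        𝔻.obj A = ⟨D'.obj A.F, D.obj A.E, (θ.app A.F).trans A.ε.symm⟩) ∧
      Nonempty (𝔻 ⋙ 𝔻 ≅ 𝟭 (HolObj D)) := by
  refine ⟨dualHol D D' θ, fun A => rfl, ⟨?_⟩⟩
  refine NatIso.ofComponents (fun A => holIsoOfIso (η.app A.E)) (fun {A B} u => ?_)
  exact HolHom.ext_f (by simpa [dualHol, holIsoOfIso] using η.hom.naturality u.f)
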